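/- Let R > 0 and η ∈ (0,1) satisfy ηR > diam(K), let ξ ∈ ℝ^d, and let w : ℝ^d → ℝ be a measurable, ℤ^d-periodic, locally square-integrable function. Then ∬_{{(x,y) ∈ K × E : |x−y| < R}} ( w(x) − w(y) + ξ·(x−y) )² dx dy ≥ |K|² Σ_{{k ∈ ℤ^d : |k| < (1−η)R}} (ξ·k)². -/

import Mathlib

open MeasureTheory Filter Metric Set Pointwise
open scoped Topology ENNReal NNReal

noncomputable section

/-- The lattice point of `ℤ^d` inside `ℝ^d`. -/
def lat (d : ℕ) (k : Fin d → ℤ) : EuclideanSpace ℝ (Fin d) := WithLp.toLp 2 (fun i => (k i : ℝ))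

/-- The periodic set `E = ⋃_{k ∈ ℤ^d} (k + K)`. -/
def latSet (d : ℕ) (K : Set (EuclideanSpace ℝ (Fin d))) : Set (EuclideanSpace ℝ (Fin d)) :=
  ⋃ k : Fin d → ℤ, (lat d k +ᵥ K)

/-- `K` is compact, the closure of a bounded connected open set, with negligible boundary,
whose integer translates are pairwise disjoint. -/
def IsAdmissibleK (d : ℕ) (K : Set (EuclideanSpace ℝ (Fin d))) : Prop :=
  (∃ U : Set (EuclideanSpace ℝ (Fin d)),
      IsOpen U ∧ IsConnected U ∧ Bornology.IsBounded U ∧ K = closure U) ∧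
  MeasureTheory.volume (frontier K) = 0 ∧
  ∀ k : Fin d → ℤ, k ≠ 0 → Disjoint (lat d k +ᵥ K) K

/-- `φ` is a radial kernel with nonincreasing nonnegative profile `φ₀` and finite
second moment. -/
def IsKernel (d : ℕ) (φ : EuclideanSpace ℝ (Fin d) → ℝ) (φ₀ : ℝ → ℝ) : Prop :=
  (∀ t, 0 ≤ φ₀ t) ∧ AntitoneOn φ₀ (Set.Ici 0) ∧ (∀ ξ, φ ξ = φ₀ ‖ξ‖) ∧
  MeasureTheory.Integrable (fun ξ : EuclideanSpace ℝ (Fin d) => φ ξ * (1 + ‖ξ‖ ^ 2))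

/-- The nonlocal functional `F^φ_{δ,ε}`. -/
def Fphi (d : ℕ) (φ : EuclideanSpace ℝ (Fin d) → ℝ) (Ω K : Set (EuclideanSpace ℝ (Fin d)))
    (δ ε : ℝ) (u : EuclideanSpace ℝ (Fin d) → ℝ) : ℝ :=
  (ε ^ (d + 2))⁻¹ * ∫ x in Ω ∩ δ • latSet d K, ∫ y in Ω ∩ δ • latSet d K,
    φ (ε⁻¹ • (x - y)) * (u x - u y) ^ 2

/-- The nonlocal functional `F_{δ,ε}` with the truncation kernel `χ_{B₁}`. -/
def Fball (d : ℕ) (Ω K : Set (EuclideanSpace ℝ (Fin d))) (δ ε : ℝ)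
    (u : EuclideanSpace ℝ (Fin d) → ℝ) : ℝ :=
  (ε ^ (d + 2))⁻¹ *
    ∫ p in ((Ω ∩ δ • latSet d K) ×ˢ (Ω ∩ δ • latSet d K)) ∩
      {p : EuclideanSpace ℝ (Fin d) × EuclideanSpace ℝ (Fin d) | dist p.1 p.2 < ε},
      (u p.1 - u p.2) ^ 2

/-!
Write `u = w + ⟪ξ, ·⟫`, so that the integrand is `(u x - u y) ^ 2` and `u (k + y) = u y + ⟪ξ, k⟫`
by periodicity. For `|k| < (1 - η) R` the block `K × (k + K)` lies in the domain of integration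
because `diam K < η R`, and these blocks are pairwise disjoint. Translating the second variable
turns the integral over the block into `∬_{K × K} (u x - u y - ⟪ξ, k⟫) ^ 2`; as `u x - u y` is
antisymmetric, this equals `∬_{K × K} ((u x - u y) ^ 2 + ⟪ξ, k⟫ ^ 2) ≥ |K| ^ 2 ⟪ξ, k⟫ ^ 2`.
-/

namespace MeasureTheory

variable {α : Type*} [MeasurableSpace α]

lemma sum_setIntegral_le_setIntegral {μ : Measure α} {ι : Type*} (s : Finset ι)
    {S : ι → Set α} {A : Set α} {f : α → ℝ} (hS : ∀ i ∈ s, MeasurableSet (S i))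
    (hdisj : (s : Set ι).PairwiseDisjoint S) (hSA : ∀ i ∈ s, S i ⊆ A) (hf : 0 ≤ f)
    (hfA : IntegrableOn f A μ) :
    ∑ i ∈ s, ∫ x in S i, f x ∂μ ≤ ∫ x in A, f x ∂μ := by
  rw [← integral_biUnion_finset s hS hdisj fun i hi => hfA.mono_set (hSA i hi)]
  exact setIntegral_mono_set hfA (.of_forall hf) (Set.iUnion₂_subset hSA).eventuallyLE

lemma measureReal_sq_mul_sq_le_integral_sub_sub_sq {μ : Measure α} [IsFiniteMeasure μ]
    {u : α → ℝ} (hu : MemLp u 2 μ) (a : ℝ) :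
    μ.real univ ^ 2 * a ^ 2 ≤ ∫ p, (u p.1 - u p.2 - a) ^ 2 ∂μ.prod μ := by
  have hg : MemLp (fun p : α × α => u p.1 - u p.2) 2 (μ.prod μ) :=
    (hu.comp_fst μ).sub (hu.comp_snd μ)
  have hminus : Integrable (fun p : α × α => (u p.1 - u p.2 - a) ^ 2) (μ.prod μ) :=
    (hg.sub (memLp_const a)).integrable_sq
  have hplus : Integrable (fun p : α × α => (u p.1 - u p.2 + a) ^ 2) (μ.prod μ) :=
    (hg.add (memLp_const a)).integrable_sq
  have hswap :
      ∫ p, (u p.1 - u p.2 + a) ^ 2 ∂μ.prod μ = ∫ p, (u p.1 - u p.2 - a) ^ 2 ∂μ.prod μ := by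
    rw [← integral_prod_swap]
    congr 1 with p
    simp only [Prod.fst_swap, Prod.snd_swap]
    ring
  have hmass : (μ.prod μ).real univ = μ.real univ ^ 2 := by
    rw [← univ_prod_univ, measureReal_prod_prod, sq]
  have h2 : ∫ _p, 2 * a ^ 2 ∂μ.prod μ ≤
      ∫ p, ((u p.1 - u p.2 - a) ^ 2 + (u p.1 - u p.2 + a) ^ 2) ∂μ.prod μ :=
    integral_mono (integrable_const _) (hminus.add hplus) fun p => by
      nlinarith [sq_nonneg (u p.1 - u p.2)]
  rw [integral_const, hmass, integral_add hminus hplus, hswap, smul_eq_mul] at h2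
  linarith

variable {G : Type*} [MeasurableSpace G] [AddGroup G] [MeasurableAdd G]

lemma setIntegral_prod_vadd_right {E : Type*} [NormedAddCommGroup E] [NormedSpace ℝ E]
    (ν : Measure α) (μ : Measure G) [SFinite ν] [SFinite μ] [μ.IsAddLeftInvariant]
    (s : Set α) (t : Set G) (c : G) (f : α × G → E) :
    ∫ p in s ×ˢ (c +ᵥ t), f p ∂ν.prod μ = ∫ p in s ×ˢ t, f (p.1, c + p.2) ∂ν.prod μ := by
  have hpre : Prod.map id (c + ·) ⁻¹' (s ×ˢ (c +ᵥ t)) = s ×ˢ t := by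
    ext ⟨x, y⟩
    simp [mem_vadd_set_iff_neg_vadd_mem]
  rw [← hpre]
  exact (((MeasurePreserving.id ν).prod (measurePreserving_add_left μ c)).setIntegral_preimage_emb
    (MeasurableEmbedding.id.prodMap (measurableEmbedding_addLeft c)) f _).symm

lemma measureReal_sq_mul_sq_le_setIntegral_prod_vadd (μ : Measure G) [SFinite μ]
    [μ.IsAddLeftInvariant] {K : Set G} (hK : μ K ≠ ∞) {u : G → ℝ} (hu : MemLp u 2 (μ.restrict K))
    {c : G} {a : ℝ}
    (hc : ∀ x, u (c + x) = u x + a) :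
    μ.real K ^ 2 * a ^ 2 ≤ ∫ p in K ×ˢ (c +ᵥ K), (u p.1 - u p.2) ^ 2 ∂μ.prod μ := by
  have : IsFiniteMeasure (μ.restrict K) := isFiniteMeasure_restrict.2 hK
  rw [setIntegral_prod_vadd_right, ← Measure.prod_restrict, ← measureReal_restrict_apply_univ]
  simp only [hc, sub_add_eq_sub_sub]
  exact measureReal_sq_mul_sq_le_integral_sub_sub_sq hu a

lemma integrableOn_prod_sub_sq {X : Type*} [TopologicalSpace X] [MeasurableSpace X]
    {μ : Measure X} [SFinite μ] [IsFiniteMeasureOnCompacts μ] {u : X → ℝ}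
    (hu : ∀ C, IsCompact C → MemLp u 2 (μ.restrict C)) {K L : Set X} (hK : IsCompact K)
    (hL : IsCompact L) :
    IntegrableOn (fun p => (u p.1 - u p.2) ^ 2) (K ×ˢ L) (μ.prod μ) := by
  have : IsFiniteMeasure (μ.restrict K) := isFiniteMeasure_restrict.2 hK.measure_lt_top.ne
  have : IsFiniteMeasure (μ.restrict L) := isFiniteMeasure_restrict.2 hL.measure_lt_top.ne
  rw [IntegrableOn, ← Measure.prod_restrict]
  exact (((hu K hK).comp_fst _).sub ((hu L hL).comp_snd _)).integrable_sq

end MeasureTheory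

lemma prod_vadd_subset_setOf_dist_lt {E : Type*} [SeminormedAddCommGroup E] {K : Set E}
    (hK : Bornology.IsBounded K) {c : E} {R : ℝ} (h : diam K + ‖c‖ < R) :
    K ×ˢ (c +ᵥ K) ⊆ {p | dist p.1 p.2 < R} := by
  rintro ⟨x, _⟩ ⟨hx, y, hy, rfl⟩
  calc dist x (c +ᵥ y) ≤ dist x y + dist y (c +ᵥ y) := dist_triangle _ _ _
    _ ≤ diam K + ‖c‖ := by
      gcongr
      · exact dist_le_diam_of_mem hK hx hy
      · simp [vadd_eq_add, dist_eq_norm]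
    _ < R := h

lemma lat_sub {d : ℕ} (k k' : Fin d → ℤ) : lat d (k - k') = lat d k - lat d k' := by
  ext i
  simp [lat]

lemma pairwise_disjoint_lat_vadd {d : ℕ} {K : Set (EuclideanSpace ℝ (Fin d))}
    (h : ∀ k : Fin d → ℤ, k ≠ 0 → Disjoint (lat d k +ᵥ K) K) :
    Pairwise (Function.onFun Disjoint fun k => lat d k +ᵥ K) := by
  intro k k' hne
  have hk : lat d k +ᵥ K = lat d k' +ᵥ (lat d (k - k') +ᵥ K) := by
    rw [vadd_vadd, lat_sub, add_sub_cancel]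
  rw [Function.onFun, hk, disjoint_vadd_set]
  exact h _ (sub_ne_zero.2 hne)

theorem stmt_11_general (d : ℕ)
    (K : Set (EuclideanSpace ℝ (Fin d))) (hK : IsAdmissibleK d K)
    (R η : ℝ)
    (hdiam : Metric.diam K < η * R)
    (ξ : EuclideanSpace ℝ (Fin d))
    (w : EuclideanSpace ℝ (Fin d) → ℝ) (hwm : Measurable w)
    (hper : ∀ x : EuclideanSpace ℝ (Fin d), ∀ k : Fin d → ℤ, w (x + lat d k) = w x)
    (hloc : ∀ C : Set (EuclideanSpace ℝ (Fin d)), IsCompact C →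
      IntegrableOn (fun x => (w x) ^ 2) C) :
    ((volume K).toReal) ^ 2 *
      ∑' k : {k : Fin d → ℤ // ‖lat d k‖ < (1 - η) * R},
        (inner ℝ ξ (lat d k.1) : ℝ) ^ 2
    ≤ ∫ p in (K ×ˢ latSet d K) ∩
        {p : EuclideanSpace ℝ (Fin d) × EuclideanSpace ℝ (Fin d) | dist p.1 p.2 < R},
        (w p.1 - w p.2 + (inner ℝ ξ (p.1 - p.2) : ℝ)) ^ 2 := by
  obtain ⟨⟨U, -, -, hUb, hKU⟩, -, hdisj⟩ := hK
  have hKc : IsCompact K := hKU ▸ hUb.isCompact_closure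
  set u : EuclideanSpace ℝ (Fin d) → ℝ := fun x => w x + inner ℝ ξ x
  have hu (C) (hC : IsCompact C) : MemLp u 2 (volume.restrict C) :=
    ((memLp_two_iff_integrable_sq hwm.aestronglyMeasurable).2 (hloc C hC)).add
      ((memLp_two_iff_integrable_sq (by fun_prop)).2
        ((by fun_prop : Continuous fun x => inner ℝ ξ x ^ 2).continuousOn.integrableOn_compact hC))
  have hsq (p : EuclideanSpace ℝ (Fin d) × EuclideanSpace ℝ (Fin d)) :
      (w p.1 - w p.2 + inner ℝ ξ (p.1 - p.2)) ^ 2 = (u p.1 - u p.2) ^ 2 := by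
    simp only [u, inner_sub_right]
    ring
  simp only [hsq]
  have hA : IntegrableOn (fun p => (u p.1 - u p.2) ^ 2)
      ((K ×ˢ latSet d K) ∩ {p | dist p.1 p.2 < R}) :=
    (integrableOn_prod_sub_sq hu hKc (hKc.cthickening (r := R))).mono_set fun p hp =>
      ⟨hp.1.1, mem_cthickening_of_dist_le _ _ _ _ hp.1.1 (dist_comm p.1 p.2 ▸ hp.2.le)⟩
  rw [← tsum_mul_left]
  refine Real.tsum_le_of_sum_le (fun k => by positivity) fun s => ?_
  calc _ ≤ ∑ k ∈ s, ∫ p in K ×ˢ (lat d k +ᵥ K), (u p.1 - u p.2) ^ 2 :=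
        Finset.sum_le_sum fun k _ =>
          measureReal_sq_mul_sq_le_setIntegral_prod_vadd volume hKc.measure_lt_top.ne (hu K hKc)
            fun x => by simp only [u, add_comm (lat d k) x, hper, inner_add_right]; ring
    _ ≤ _ := by
      refine sum_setIntegral_le_setIntegral s
        (fun k _ => hKc.measurableSet.prod (hKc.measurableSet.const_vadd _)) ?_ (fun k _ => ?_)
        (fun _ => sq_nonneg _) hA
      · intro k _ k' _ hne
        exact disjoint_prod.2 <| .inr <|
          pairwise_disjoint_lat_vadd hdisj (Subtype.coe_ne_coe.2 hne)
      · exact subset_inter (prod_mono_right (subset_iUnion (fun k => lat d k +ᵥ K) k))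
          (prod_vadd_subset_setOf_dist_lt hKc.isBounded (by linarith [k.2]))

/-- double Jensen lower bound for periodic test functions. -/
theorem stmt_11 (d : ℕ) (hd : 1 ≤ d)
    (K : Set (EuclideanSpace ℝ (Fin d))) (hK : IsAdmissibleK d K)
    (R η : ℝ) (hR : 0 < R) (hη0 : 0 < η) (hη1 : η < 1)
    (hdiam : Metric.diam K < η * R)
    (ξ : EuclideanSpace ℝ (Fin d))
    (w : EuclideanSpace ℝ (Fin d) → ℝ) (hwm : Measurable w)
    (hper : ∀ x : EuclideanSpace ℝ (Fin d), ∀ k : Fin d → ℤ, w (x + lat d k) = w x)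
    (hloc : ∀ C : Set (EuclideanSpace ℝ (Fin d)), IsCompact C →
      IntegrableOn (fun x => (w x) ^ 2) C) :
    ((volume K).toReal) ^ 2 *
      ∑' k : {k : Fin d → ℤ // ‖lat d k‖ < (1 - η) * R},
        (inner ℝ ξ (lat d k.1) : ℝ) ^ 2
    ≤ ∫ p in (K ×ˢ latSet d K) ∩
        {p : EuclideanSpace ℝ (Fin d) × EuclideanSpace ℝ (Fin d) | dist p.1 p.2 < R},
        (w p.1 - w p.2 + (inner ℝ ξ (p.1 - p.2) : ℝ)) ^ 2 :=
  stmt_11_general d K hK R η hdiam ξ w hwm hper hloc
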